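/- Let η and η̃ be orthogonal hyperbolic pairs in an odd form ring (R, Δ). For a ∈ R_{η̃η} = e_{η̃} R e_η, the transvection T^η(q_{η̃}·a) satisfies β(T^η(q_{η̃}·a)) = a − ā and γ(T^η(q_{η̃}·a)) = q_{η̃}·a ∸ q_{−η}·ā ∸ φ(a), and moreover T^η(q_{η̃}·a) = T^{−η̃}(q_{−η}·(−ā)). -/

import Mathlib

/-! Both `q_{η̃}·a` and `q_{−η}·(−ā)` have `ρ = 0`, so each transvection reduces to
`u ∸ q·π̄(u) ∸ φ(π(u))`.  The two resulting expressions agree because `q_{η̃}·a` and `q_{−η}·ā`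
commute (their commutator is `φ(ā ā)`, and `ā ā = 0` as `e_η e_{η̃} = 0`), and because
`φ(ā) = φ(a)⁻¹`, the element `a + ā` being symmetric. -/

open scoped commutatorElement

/-- An odd form ring `(R, Δ)`: a non-unital ring `R` with involution `conj`,
a group `Δ` with a right action of the multiplicative semigroup `R^•` and
structure maps `phi : R → Δ`, `pi ρ : Δ → R` satisfying the odd form ring
axioms.  The group operation of `Δ` (written `∔` in the paper) is written
multiplicatively here. -/
structure OddForm (R Δ : Type*) [NonUnitalRing R] [Group Δ] where
  conj : R → R
  conj_add : ∀ a b, conj (a + b) = conj a + conj b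
  conj_mul : ∀ a b, conj (a * b) = conj b * conj a
  conj_conj : ∀ a, conj (conj a) = a
  act : Δ → R → Δ
  act_mul : ∀ u v a, act (u * v) a = act u a * act v a
  act_act : ∀ u a b, act (act u a) b = act u (a * b)
  phi : R → Δ
  pi : Δ → R
  rho : Δ → R
  pi_mul : ∀ u v, pi (u * v) = pi u + pi v
  pi_act : ∀ u a, pi (act u a) = pi u * a
  phi_add : ∀ a b, phi (a + b) = phi a * phi b
  phi_act : ∀ a b, act (phi b) a = phi (conj a * b * a)
  rho_mul : ∀ u v, rho (u * v) = rho u - conj (pi u) * pi v + rho v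
  rho_act : ∀ u a, rho (act u a) = conj a * rho u * a
  rho_pi : ∀ u, rho u + conj (rho u) + conj (pi u) * pi u = 0
  pi_phi : ∀ a, pi (phi a) = 0
  rho_phi : ∀ a, rho (phi a) = a - conj a
  comm_phi : ∀ u v, ⁅u, v⁆ = phi (-(conj (pi u) * pi v))
  phi_symm : ∀ a, conj a = a → phi a = 1
  act_addR : ∀ u a b, act u (a + b) = act u a * phi (conj b * rho u * a) * act u b

namespace OddForm

variable {R Δ : Type*} [NonUnitalRing R] [Group Δ]

/-- The action of `a + 1` (an element of the unitalization `R ⋊ ℤ`) on `Δ`: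
`u · (a + 1) = u·a ∔ φ(ρ(u) a) ∔ u`. -/
def actA (o : OddForm R Δ) (u : Δ) (a : R) : Δ :=
  o.act u a * o.phi (o.rho u * a) * u

/-- Membership in the unitary group `U(R, Δ)`: for `g = (β, γ)` with `α = β + 1`,
`α⁻¹ = conj α` (expressed without the unitalization) together with `π(γ) = β` and
`ρ(γ) = conj β`. -/
def umem (o : OddForm R Δ) (g : R × Δ) : Prop :=
  g.1 * o.conj g.1 + g.1 + o.conj g.1 = 0 ∧
  o.conj g.1 * g.1 + o.conj g.1 + g.1 = 0 ∧
  o.pi g.2 = g.1 ∧ o.rho g.2 = o.conj g.1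

/-- The group operation of the unitary group: `α(gg') = α(g) α(g')` and
`γ(gg') = γ(g) · α(g') ∔ γ(g')`. -/
def umul (o : OddForm R Δ) (g h : R × Δ) : R × Δ :=
  (g.1 * h.1 + g.1 + h.1, o.actA g.2 h.1 * h.2)

/-- The identity element of the unitary group. -/
def uone (o : OddForm R Δ) : R × Δ := ((0 : R), (1 : Δ))

/-- The inverse in the unitary group: `β(g⁻¹) = conj β(g)`,
`γ(g⁻¹) = (γ(g) · conj α(g))⁻¹`. -/
def uinv (o : OddForm R Δ) (g : R × Δ) : R × Δ :=
  (o.conj g.1, (o.actA g.2 (o.conj g.1))⁻¹)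

end OddForm

namespace OddForm

variable {R Δ : Type*} [NonUnitalRing R] [Group Δ]

/-- `η = (em, ep, qm, qp)` is a hyperbolic pair: `ep = e_η`, `em = e_{−η}` are
orthogonal idempotents with `em = conj ep`, and `qp = q_η`, `qm = q_{−η}` satisfy
`π(q_{±η}) = e_{±η}`, `ρ(q_{±η}) = 0`, `q_{±η} = q_{±η}·e_{±η}`. -/
def IsHPair (o : OddForm R Δ) (em ep : R) (qm qp : Δ) : Prop :=
  ep * ep = ep ∧ em * em = em ∧ ep * em = 0 ∧ em * ep = 0 ∧
  o.conj ep = em ∧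
  o.pi qp = ep ∧ o.pi qm = em ∧ o.rho qp = 0 ∧ o.rho qm = 0 ∧
  o.act qp ep = qp ∧ o.act qm em = qm

/-- Membership in `Δ_η^{|η|'} = {u ∈ Δ·e_η | e_{|η|} π(u) = 0}`. -/
def Dmem (o : OddForm R Δ) (em ep : R) (u : Δ) : Prop :=
  o.act u ep = u ∧ (ep + em) * o.pi u = 0

/-- The transvection `T^η(u)`, as an element of `R × Δ`:
`β = ρ(u) + π(u) − conj π(u)`,
`γ = u ∔ q_{−η}·(ρ(u) − conj π(u)) ∸ φ(ρ(u) + π(u))`. -/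
def Tv (o : OddForm R Δ) (qm : Δ) (u : Δ) : R × Δ :=
  (o.rho u + o.pi u - o.conj (o.pi u),
   u * o.act qm (o.rho u - o.conj (o.pi u)) * (o.phi (o.rho u + o.pi u))⁻¹)

/-- `a` and `b` are mutually inverse elements of the unital ring
`R_{ηη} = e_η R e_η` (with identity `ep`). -/
def IsInvPair (ep a b : R) : Prop :=
  a = ep * a * ep ∧ b = ep * b * ep ∧ a * b = ep ∧ b * a = ep

/-- The elementary dilation `D^η(a)` (with `b = a⁻¹` in `R_{ηη}`):
`β = a + conj(a)⁻¹ − e_{|η|}`,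
`γ = q_{−η}·(conj(a)⁻¹ − e_{−η}) ∔ q_η·(a − e_η) ∸ φ(a − e_η)`. -/
def Dil (o : OddForm R Δ) (em ep : R) (qm qp : Δ) (a b : R) : R × Δ :=
  (a + o.conj b - (ep + em),
   o.act qm (o.conj b - em) * o.act qp (a - ep) * (o.phi (a - ep))⁻¹)

/-- Membership in the maximal parabolic subgroup `P_η`. -/
def Pmem (o : OddForm R Δ) (em ep : R) (qm : Δ) (g : R × Δ) : Prop :=
  o.umem g ∧ g.1 * em = em * g.1 * em ∧ ep * g.1 = ep * g.1 * ep ∧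
  o.act g.2 em = o.act qm (g.1 * em)

/-- Membership in the smaller unitary group `U_{|η|'}`. -/
def Uprime (o : OddForm R Δ) (em ep : R) (g : R × Δ) : Prop :=
  o.umem g ∧ g.1 * (ep + em) = 0 ∧ (ep + em) * g.1 = 0 ∧ o.act g.2 (ep + em) = 1

end OddForm

section CornerRing

variable {R : Type*} [NonUnitalRing R] {e f x : R}

theorem idem_mul_eq_self_of_eq_mul_mul (he : e * e = e) (hx : x = e * x * f) : e * x = x := by
  rw [hx]; simp only [← mul_assoc, he]

theorem mul_idem_eq_self_of_eq_mul_mul (hf : f * f = f) (hx : x = e * x * f) : x * f = x := by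
  rw [hx]; simp only [mul_assoc, hf]

theorem mul_eq_zero_of_absorbed_by_orthogonal {E E' : R} (h : E * E' = 0) (he : e * E = e)
    (hf : E' * f = f) : e * f = 0 := by
  rw [← he, ← hf, mul_assoc, ← mul_assoc E, h, zero_mul, mul_zero]

end CornerRing

namespace OddForm

variable {R Δ : Type*} [NonUnitalRing R] [Group Δ] (o : OddForm R Δ)

theorem conj_zero : o.conj 0 = 0 := by
  simpa using o.conj_add 0 0

theorem conj_neg (x : R) : o.conj (-x) = -o.conj x := by
  have h := o.conj_add x (-x)
  rw [add_neg_cancel, conj_zero] at h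
  exact eq_neg_of_add_eq_zero_right h.symm

theorem phi_zero : o.phi 0 = 1 := by
  simpa using o.phi_add 0 0

theorem phi_neg (x : R) : o.phi (-x) = (o.phi x)⁻¹ := by
  have h := o.phi_add x (-x)
  rw [add_neg_cancel, phi_zero] at h
  exact eq_inv_of_mul_eq_one_right h.symm

theorem phi_conj (x : R) : o.phi (o.conj x) = (o.phi x)⁻¹ := by
  have hsymm : o.conj (x + o.conj x) = x + o.conj x := by
    rw [o.conj_add, o.conj_conj, add_comm]
  have h := o.phi_symm _ hsymm
  rw [o.phi_add] at h
  exact eq_inv_of_mul_eq_one_right h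

theorem act_zero (u : Δ) : o.act u 0 = 1 := by
  simpa [conj_zero, phi_zero] using o.act_addR u 0 0

theorem act_neg_of_rho_eq_zero {u : Δ} (hu : o.rho u = 0) (x : R) :
    o.act u (-x) = (o.act u x)⁻¹ := by
  have h := o.act_addR u x (-x)
  rw [add_neg_cancel, hu, mul_zero, zero_mul, phi_zero, mul_one, act_zero] at h
  exact eq_inv_of_mul_eq_one_right h.symm

theorem rho_act_of_rho_eq_zero {u : Δ} (hu : o.rho u = 0) (x : R) : o.rho (o.act u x) = 0 := by
  rw [o.rho_act, hu, mul_zero, zero_mul]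

theorem commute_of_conj_pi_mul_pi_eq_zero {u v : Δ} (h : o.conj (o.pi u) * o.pi v = 0) :
    Commute u v := by
  have hcomm := o.comm_phi u v
  rw [h, neg_zero, phi_zero] at hcomm
  exact commutatorElement_eq_one_iff_mul_comm.mp hcomm

theorem Tv_of_rho_eq_zero {q u : Δ} (hq : o.rho q = 0) (hu : o.rho u = 0) :
    Tv o q u = (o.pi u - o.conj (o.pi u),
      u * (o.act q (o.conj (o.pi u)))⁻¹ * (o.phi (o.pi u))⁻¹) := by
  simp only [Tv, hu, zero_add, zero_sub, o.act_neg_of_rho_eq_zero hq]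

end OddForm

open OddForm in
/-- Here `Tv o qp'` is `T^{−η̃}`: the pair `−η̃` has `q_{−(−η̃)} = q_{η̃}`. -/
theorem special_transvections {R Δ : Type*} [NonUnitalRing R] [Group Δ]
    (o : OddForm R Δ) (em ep : R) (qm qp : Δ) (hη : IsHPair o em ep qm qp)
    (em' ep' : R) (qm' qp' : Δ) (hη' : IsHPair o em' ep' qm' qp')
    (horth : (ep + em) * (ep' + em') = 0 ∧ (ep' + em') * (ep + em) = 0)
    (a : R) (ha : a = ep' * a * ep) :
    (Tv o qm (o.act qp' a)).1 = a - o.conj a ∧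
    (Tv o qm (o.act qp' a)).2 =
      o.act qp' a * (o.act qm (o.conj a))⁻¹ * (o.phi a)⁻¹ ∧
    Tv o qm (o.act qp' a) = Tv o qp' (o.act qm (-(o.conj a))) := by
  obtain ⟨hpp, -, hpm, -, hcp, -, hπm, -, hρm, -, -⟩ := hη
  obtain ⟨hpp', -, -, hmp', -, hπp', -, hρp', -, -, -⟩ := hη'
  have haep : a * ep = a := mul_idem_eq_self_of_eq_mul_mul hpp ha
  have hepa : ep' * a = a := idem_mul_eq_self_of_eq_mul_mul hpp' ha
  have hpp'0 : ep * ep' = 0 :=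
    mul_eq_zero_of_absorbed_by_orthogonal horth.1 (by rw [mul_add, hpp, hpm, add_zero])
      (by rw [add_mul, hpp', hmp', add_zero])
  have haa : a * a = 0 :=
    calc a * a = a * ep * (ep' * a) := by rw [haep, hepa]
      _ = 0 := by rw [mul_assoc, ← mul_assoc ep, hpp'0, zero_mul, mul_zero]
  have hπu : o.pi (o.act qp' a) = a := by rw [o.pi_act, hπp', hepa]
  have hπv : o.pi (o.act qm (-o.conj a)) = -o.conj a := by
    rw [o.pi_act, hπm, mul_neg, ← hcp, ← o.conj_mul, haep]
  have hcomm : Commute (o.act qp' a) (o.act qm (-o.conj a)) := by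
    refine o.commute_of_conj_pi_mul_pi_eq_zero ?_
    rw [hπu, hπv, mul_neg, ← o.conj_mul, haa, conj_zero, neg_zero]
  rw [Tv_of_rho_eq_zero o hρm (o.rho_act_of_rho_eq_zero hρp' a),
    Tv_of_rho_eq_zero o hρp' (o.rho_act_of_rho_eq_zero hρm _), hπu, hπv]
  refine ⟨rfl, rfl, Prod.ext (by rw [conj_neg, o.conj_conj, sub_neg_eq_add, neg_add_eq_sub]) ?_⟩
  dsimp only
  rw [conj_neg, o.conj_conj, o.act_neg_of_rho_eq_zero hρp', inv_inv, phi_neg, phi_conj, inv_inv,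
    ← hcomm.eq, o.act_neg_of_rho_eq_zero hρm]
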